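/- Let Q ∈ ℝ^{d×d} be symmetric positive semidefinite, b ∈ ℝ^d, λ > 0, let θ* ∈ ℝ^d be s-sparse, and let θ̂ be a global minimizer of ½θᵀQθ − bᵀθ + λ‖θ‖₁ over ℝ^d; set Δ̂ = θ̂ − θ*. If λ ≥ 2‖Qθ* − b‖_∞, then ‖Δ̂‖₁ ≤ 10√s·‖Δ̂‖₂. If moreover Δ̂ᵀQΔ̂ ≥ κ‖Δ̂‖₂² for some κ > 0, then ‖Δ̂‖₂ ≤ 30√s·(λ/κ) and ‖Δ̂‖₁ ≤ 300s·(λ/κ). -/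

import Mathlib

/-!
Comparing the objective at `θh` and at `θs` and expanding the quadratic form around `θs` gives
the basic inequality `½ ΔᵀQΔ ≤ ⟨b - Qθs, Δ⟩ + λ (‖θs‖₁ - ‖θh‖₁)` for `Δ = θh - θs`. By Hölder the
linear term is at most `(λ/2) ‖Δ‖₁`, and since `θs` vanishes off its support `S`,
`‖θs‖₁ - ‖θh‖₁ ≤ ‖Δ_S‖₁ - ‖Δ_Sᶜ‖₁`. As `ΔᵀQΔ ≥ 0` this forces the cone condition
`‖Δ_Sᶜ‖₁ ≤ 3 ‖Δ_S‖₁` together with `ΔᵀQΔ ≤ 3λ ‖Δ_S‖₁`, and Cauchy–Schwarz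
`‖Δ_S‖₁ ≤ √s ‖Δ‖₂` turns these into the three bounds (even with constants 4, 3 and 12).
-/

open Finset

noncomputable section

/-- ℓ₁ norm on `ℝ^d`. -/
def l1 {d : ℕ} (v : Fin d → ℝ) : ℝ := ∑ i, |v i|

/-- ℓ₂ norm on `ℝ^d`. -/
def l2 {d : ℕ} (v : Fin d → ℝ) : ℝ := Real.sqrt (∑ i, (v i) ^ 2)

/-- ℓ∞ norm on `ℝ^d` (maximum absolute entry). -/
def linf {d : ℕ} (v : Fin d → ℝ) : ℝ := sSup {r : ℝ | ∃ i, r = |v i|}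

/-- A vector is `s`-sparse if it has at most `s` nonzero entries. -/
def sparse {d : ℕ} (s : ℕ) (v : Fin d → ℝ) : Prop := {i | v i ≠ 0}.ncard ≤ s

/-- The quadratic form `vᵀ A v` of a matrix. -/
def quadForm {d : ℕ} (A : Matrix (Fin d) (Fin d) ℝ) (v : Fin d → ℝ) : ℝ :=
  ∑ i, ∑ j, v i * A i j * v j

theorem mul_le_of_mul_sq_le_mul {α : Type*} [Semiring α] [LinearOrder α] [IsStrictOrderedRing α]
    {a c x : α} (hc : 0 ≤ c) (hx : 0 ≤ x) (h : a * x ^ 2 ≤ c * x) : a * x ≤ c := by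
  rcases hx.eq_or_lt with rfl | hx
  · simpa using hc
  · exact le_of_mul_le_mul_right (by rwa [mul_assoc, ← sq]) hx

def lassoObjective {d : ℕ} (Q : Matrix (Fin d) (Fin d) ℝ) (b : Fin d → ℝ) (lam : ℝ)
    (θ : Fin d → ℝ) : ℝ :=
  quadForm Q θ / 2 - ∑ i, b i * θ i + lam * l1 θ

section Lasso

open Matrix

variable {d : ℕ}

theorem quadForm_eq_dotProduct_mulVec (A : Matrix (Fin d) (Fin d) ℝ) (v : Fin d → ℝ) :
    quadForm A v = v ⬝ᵥ A *ᵥ v := by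
  simp only [quadForm, dotProduct, mulVec, mul_sum, mul_assoc]

theorem quadForm_add {A : Matrix (Fin d) (Fin d) ℝ} (hA : A.IsSymm) (u v : Fin d → ℝ) :
    quadForm A (u + v) = quadForm A u + 2 * (u ⬝ᵥ A *ᵥ v) + quadForm A v := by
  have hswap : v ⬝ᵥ A *ᵥ u = u ⬝ᵥ A *ᵥ v := by
    rw [dotProduct_mulVec, ← mulVec_transpose, hA.eq, dotProduct_comm]
  simp only [quadForm_eq_dotProduct_mulVec, mulVec_add, add_dotProduct, dotProduct_add,
    hswap]
  ring

theorem abs_le_linf (v : Fin d → ℝ) (i : Fin d) : |v i| ≤ linf v := by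
  refine le_csSup ?_ ⟨i, rfl⟩
  refine (Set.finite_range fun j => |v j|).bddAbove.mono ?_
  rintro _ ⟨j, rfl⟩
  exact ⟨j, rfl⟩

theorem abs_dotProduct_le_linf_mul_l1 (v w : Fin d → ℝ) : |v ⬝ᵥ w| ≤ linf v * l1 w := by
  calc |v ⬝ᵥ w| ≤ ∑ i, |v i| * |w i| := by
        simpa only [dotProduct, abs_mul] using abs_sum_le_sum_abs (fun i => v i * w i) univ
    _ ≤ ∑ i, linf v * |w i| := by gcongr with i; exact abs_le_linf v i
    _ = linf v * l1 w := by rw [l1, mul_sum]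

theorem l1_eq_sum_add_sum_compl (S : Finset (Fin d)) (v : Fin d → ℝ) :
    l1 v = ∑ i ∈ S, |v i| + ∑ i ∈ Sᶜ, |v i| :=
  (sum_add_sum_compl S _).symm

theorem l1_sub_l1_le_of_support_subset {S : Finset (Fin d)} {θ : Fin d → ℝ}
    (hθ : ∀ i ∉ S, θ i = 0) (θ' : Fin d → ℝ) :
    l1 θ - l1 θ' ≤ ∑ i ∈ S, |(θ' - θ) i| - ∑ i ∈ Sᶜ, |(θ' - θ) i| := by
  have hS : ∑ i ∈ S, (|θ i| - |θ' i|) ≤ ∑ i ∈ S, |(θ' - θ) i| := by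
    gcongr with i
    rw [Pi.sub_apply, abs_sub_comm]
    exact abs_sub_abs_le_abs_sub _ _
  have hSc : ∑ i ∈ Sᶜ, (|θ i| - |θ' i|) = -∑ i ∈ Sᶜ, |(θ' - θ) i| := by
    rw [← sum_neg_distrib]
    refine sum_congr rfl fun i hi => ?_
    simp [hθ i (mem_compl.mp hi)]
  rw [l1, l1, ← sum_sub_distrib, ← sum_add_sum_compl S, hSc]
  linarith

theorem sum_abs_le_sqrt_card_mul_l2 (S : Finset (Fin d)) (v : Fin d → ℝ) :
    ∑ i ∈ S, |v i| ≤ √(#S : ℝ) * l2 v := by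
  have hsq : (∑ i ∈ S, |v i|) ^ 2 ≤ (#S : ℝ) * ∑ i, v i ^ 2 :=
    calc (∑ i ∈ S, |v i|) ^ 2 ≤ #S * ∑ i ∈ S, |v i| ^ 2 := sq_sum_le_card_mul_sum_sq
      _ ≤ #S * ∑ i, v i ^ 2 := by
        simp only [sq_abs]
        gcongr
        exact subset_univ S
  rw [l2, ← Real.sqrt_mul (Nat.cast_nonneg _)]
  exact Real.le_sqrt_of_sq_le hsq

theorem card_support_le_of_sparse {s : ℕ} {θ : Fin d → ℝ} (h : sparse s θ) :
    #(univ.filter (θ · ≠ 0)) ≤ s := by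
  rwa [sparse, ← coe_filter_univ, Set.ncard_coe_finset] at h

/-- The basic inequality of the Lasso. -/
theorem quadForm_sub_le_of_lassoObjective_le {Q : Matrix (Fin d) (Fin d) ℝ} (hQ : Q.IsSymm)
    {b θ θh : Fin d → ℝ} {lam : ℝ} (hmin : lassoObjective Q b lam θh ≤ lassoObjective Q b lam θ) :
    quadForm Q (θh - θ) / 2 ≤ (b - Q *ᵥ θ) ⬝ᵥ (θh - θ) + lam * (l1 θ - l1 θh) := by
  have hexpand := quadForm_add hQ (θh - θ) θ
  rw [sub_add_cancel] at hexpand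
  have hlin : (b - Q *ᵥ θ) ⬝ᵥ (θh - θ) = b ⬝ᵥ θh - b ⬝ᵥ θ - (θh - θ) ⬝ᵥ Q *ᵥ θ := by
    rw [sub_dotProduct, dotProduct_sub, dotProduct_comm (Q *ᵥ θ)]
  have hdot : ∀ v : Fin d → ℝ, ∑ i, b i * v i = b ⬝ᵥ v := fun _ => rfl
  simp only [lassoObjective, hdot] at hmin
  linarith

/-- The cone condition of the Lasso. -/
theorem lasso_cone {Q : Matrix (Fin d) (Fin d) ℝ} (hQ : Q.IsSymm) {b θs θh : Fin d → ℝ}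
    {lam : ℝ} {S : Finset (Fin d)} (hpsd : 0 ≤ quadForm Q (θh - θs)) (hlam : 0 < lam)
    (hlam2 : 2 * linf (Q *ᵥ θs - b) ≤ lam) (hθs : ∀ i ∉ S, θs i = 0)
    (hmin : lassoObjective Q b lam θh ≤ lassoObjective Q b lam θs) :
    ∑ i ∈ Sᶜ, |(θh - θs) i| ≤ 3 * ∑ i ∈ S, |(θh - θs) i| ∧
      quadForm Q (θh - θs) ≤ 3 * lam * ∑ i ∈ S, |(θh - θs) i| := by
  have hbasic := quadForm_sub_le_of_lassoObjective_le hQ hmin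
  have hlin : (b - Q *ᵥ θs) ⬝ᵥ (θh - θs) ≤ lam / 2 * l1 (θh - θs) := by
    rw [← neg_sub, neg_dotProduct]
    calc _ ≤ |(Q *ᵥ θs - b) ⬝ᵥ (θh - θs)| := neg_le_abs _
      _ ≤ linf (Q *ᵥ θs - b) * l1 (θh - θs) := abs_dotProduct_le_linf_mul_l1 _ _
      _ ≤ lam / 2 * l1 (θh - θs) := by
        gcongr
        · exact sum_nonneg fun i _ => abs_nonneg _
        · linarith
  have hdecomp := mul_le_mul_of_nonneg_left (l1_sub_l1_le_of_support_subset hθs θh) hlam.le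
  have hoff : 0 ≤ ∑ i ∈ Sᶜ, |(θh - θs) i| := sum_nonneg fun i _ => abs_nonneg _
  rw [l1_eq_sum_add_sum_compl S] at hlin
  constructor <;> nlinarith [mul_nonneg hlam.le hoff]

end Lasso

/-- deterministic framework for the regularized Lasso-type estimator.
Let `Q ⪰ 0` be symmetric, `θ*` be `s`-sparse, and `θ̂` a global minimizer of
`½θᵀQθ − bᵀθ + λ‖θ‖₁`. If `λ ≥ 2‖Qθ* − b‖_∞`, then `‖Δ̂‖₁ ≤ 10√s‖Δ̂‖₂` for `Δ̂ = θ̂ − θ*`;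
if moreover `Δ̂ᵀQΔ̂ ≥ κ‖Δ̂‖₂²` for some `κ > 0`, then `‖Δ̂‖₂ ≤ 30√s(λ/κ)` and
`‖Δ̂‖₁ ≤ 300s(λ/κ)`. -/
theorem lasso_framework
    {d : ℕ} (Q : Matrix (Fin d) (Fin d) ℝ) (hQsym : Q.IsSymm)
    (hQpsd : ∀ v : Fin d → ℝ, 0 ≤ quadForm Q v)
    (b : Fin d → ℝ) (lam : ℝ) (hlam : 0 < lam)
    (s : ℕ) (θs : Fin d → ℝ) (hsparse : sparse s θs)
    (θh : Fin d → ℝ)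
    (hmin : ∀ θ : Fin d → ℝ,
      quadForm Q θh / 2 - ∑ i, b i * θh i + lam * l1 θh
        ≤ quadForm Q θ / 2 - ∑ i, b i * θ i + lam * l1 θ)
    (hlam2 : 2 * linf (Q.mulVec θs - b) ≤ lam) :
    l1 (θh - θs) ≤ 10 * Real.sqrt s * l2 (θh - θs) ∧
    (∀ κ : ℝ, 0 < κ → κ * (l2 (θh - θs)) ^ 2 ≤ quadForm Q (θh - θs) →
      l2 (θh - θs) ≤ 30 * Real.sqrt s * (lam / κ) ∧
      l1 (θh - θs) ≤ 300 * s * (lam / κ)) := by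
  set S := univ.filter (θs · ≠ 0)
  have hl2 : 0 ≤ l2 (θh - θs) := Real.sqrt_nonneg _
  have hS : ∀ i ∉ S, θs i = 0 := by simp [S]
  obtain ⟨hcone, hquad⟩ := lasso_cone hQsym (hQpsd _) hlam hlam2 hS (hmin θs)
  have hsupp : ∑ i ∈ S, |(θh - θs) i| ≤ √s * l2 (θh - θs) :=
    (sum_abs_le_sqrt_card_mul_l2 S _).trans <| mul_le_mul_of_nonneg_right
      (Real.sqrt_le_sqrt (by exact_mod_cast card_support_le_of_sparse hsparse)) hl2
  have hl1 : l1 (θh - θs) ≤ 4 * √s * l2 (θh - θs) := by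
    rw [l1_eq_sum_add_sum_compl S]
    linarith
  refine ⟨by nlinarith [Real.sqrt_nonneg s], fun κ hκ hRE => ?_⟩
  have hl2κ : l2 (θh - θs) ≤ 3 * √s * (lam / κ) := by
    rw [mul_div_assoc', le_div_iff₀ hκ, mul_comm]
    refine mul_le_of_mul_sq_le_mul (by positivity) hl2 ?_
    nlinarith
  have hs : √s * √s = (s : ℝ) := Real.mul_self_sqrt (Nat.cast_nonneg s)
  constructor
  · nlinarith [Real.sqrt_nonneg s]
  · calc l1 (θh - θs) ≤ 4 * √s * (3 * √s * (lam / κ)) := by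
          refine hl1.trans (mul_le_mul_of_nonneg_left hl2κ ?_)
          positivity
      _ = 12 * s * (lam / κ) := by linear_combination 12 * (lam / κ) * hs
      _ ≤ 300 * s * (lam / κ) := by gcongr; norm_num
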